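/- Let C = ⊕_{t∈ℕ} C_t be a graded coalgebra over a field. Then τ_1^{⊗(n+1)} ∘ Δ^n ∘ i_b = 0 for every 0 ≤ b ≤ n, where τ_1 : C → C[1] = ⊕_{t≥1} C_t is the projection, Δ^n : C → C^{⊗(n+1)} the iterated comultiplication, and i_b : C_b → C the inclusion. Consequently C is the directed union of the wedge powers C_0^{∧t}, i.e. C = colim_t C_0^{∧t}. -/

import Mathlib

open TensorProduct DirectSum

universe u

variable (k : Type u) [Field k]

/-- Transport along an equality of indices. -/
def lcast (C : ℕ → Type u) [∀ n, AddCommGroup (C n)] [∀ n, Module k (C n)]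
    {m n : ℕ} (h : m = n) : C m ≃ₗ[k] C n := by
  subst h; exact LinearEquiv.refl k (C m)

variable (C : ℕ → Type u) [∀ n, AddCommGroup (C n)] [∀ n, Module k (C n)]

/-- The canonical projection `τ_1 : C → C[1] = ⊕_{i≥1} C_i`. -/
noncomputable def tauOne : (⨁ n, C n) →ₗ[k] ⨁ (i : {i : ℕ // 1 ≤ i}), C i.1 :=
  DirectSum.toModule k ℕ _
    (fun i => if h : 1 ≤ i then DirectSum.lof k {j : ℕ // 1 ≤ j} (fun j => C j.1) ⟨i, h⟩ else 0)

/-- The iterated tensor powers `C[1]^{⊗(n+1)}`. -/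
noncomputable def Qt : ℕ → ModuleCat.{u} k
  | 0 => ModuleCat.of k (⨁ (i : {i : ℕ // 1 ≤ i}), C i.1)
  | n + 1 => ModuleCat.of k ((⨁ (i : {i : ℕ // 1 ≤ i}), C i.1) ⊗[k] (Qt n))

variable [Coalgebra k (⨁ n, C n)]

/-- The map `τ_1^{⊗(n+1)} ∘ Δ^n : C → C[1]^{⊗(n+1)}`. -/
noncomputable def psiTau : ∀ n : ℕ, (⨁ m, C m) →ₗ[k] Qt k C n
  | 0 => tauOne k C
  | n + 1 => (TensorProduct.map (tauOne k C) (psiTau n)) ∘ₗ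
      (Coalgebra.comul : (⨁ m, C m) →ₗ[k] (⨁ m, C m) ⊗[k] (⨁ m, C m))

/-- The wedge powers `C_0^{∧t} = ker(τ_1^{⊗t} ∘ Δ^{t-1})`, with `C_0^{∧0} = 0`. -/
noncomputable def wpowTau : ℕ → Submodule k (⨁ m, C m)
  | 0 => ⊥
  | t + 1 => LinearMap.ker (psiTau k C t)

omit [Coalgebra k (⨁ n, C n)] in
lemma tauOne_lof_zero : tauOne k C ∘ₗ DirectSum.lof k ℕ C 0 = 0 := by
  ext x
  simp [tauOne, DirectSum.toModule_lof]

/-- Let `C = ⊕_{t∈ℕ} C_t` be a graded coalgebra over a field. Then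
`τ_1^{⊗(n+1)} ∘ Δ^n ∘ i_b = 0` for every `0 ≤ b ≤ n`, and consequently `C` is the directed union
of the wedge powers `C_0^{∧t}`. -/
theorem stmt13
    (Δab : ∀ a b : ℕ, C (a + b) →ₗ[k] C a ⊗[k] C b)
    (hgr : ∀ n : ℕ, Coalgebra.comul ∘ₗ DirectSum.lof k ℕ C n =
      ∑ p ∈ (Finset.HasAntidiagonal.antidiagonal n).attach,
        (TensorProduct.map (DirectSum.lof k ℕ C p.1.1) (DirectSum.lof k ℕ C p.1.2)) ∘ₗ
          Δab p.1.1 p.1.2 ∘ₗ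
            (lcast k C (Finset.HasAntidiagonal.mem_antidiagonal.mp p.2).symm).toLinearMap) :
    (∀ n b : ℕ, b ≤ n → psiTau k C n ∘ₗ DirectSum.lof k ℕ C b = 0) ∧
    (⨆ t : ℕ, wpowTau k C t) = ⊤ := by
  have key : ∀ n b : ℕ, b ≤ n → psiTau k C n ∘ₗ DirectSum.lof k ℕ C b = 0 := by
    intro n
    induction n with
    | zero =>
      intro b hb
      obtain rfl : b = 0 := Nat.le_zero.mp hb
      exact tauOne_lof_zero k C
    | succ n ih =>
      intro b hb
      show (TensorProduct.map (tauOne k C) (psiTau k C n)) ∘ₗ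
        (Coalgebra.comul : (⨁ m, C m) →ₗ[k] _) ∘ₗ DirectSum.lof k ℕ C b = 0
      rw [hgr b]
      rw [show ∀ {M N P : Type u} [AddCommGroup M] [AddCommGroup N] [AddCommGroup P]
          [Module k M] [Module k N] [Module k P] (f : N →ₗ[k] P)
          (g : {x // x ∈ Finset.HasAntidiagonal.antidiagonal b} → (M →ₗ[k] N)),
          f ∘ₗ ∑ p ∈ (Finset.HasAntidiagonal.antidiagonal b).attach, g p =
            ∑ p ∈ (Finset.HasAntidiagonal.antidiagonal b).attach, f ∘ₗ g p from
        fun f g => by ext x; simp [LinearMap.sum_apply, map_sum]]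
      apply Finset.sum_eq_zero
      rintro ⟨⟨p, q⟩, hpq⟩ -
      have hpq' : p + q = b := Finset.HasAntidiagonal.mem_antidiagonal.mp hpq
      rw [← LinearMap.comp_assoc, ← LinearMap.comp_assoc,
        ← TensorProduct.map_comp]
      rcases Nat.eq_zero_or_pos p with hp | hp
      · subst hp
        rw [tauOne_lof_zero, TensorProduct.map_zero_left, LinearMap.zero_comp,
          LinearMap.zero_comp]
      · have hq : q ≤ n := by omega
        rw [ih q hq, TensorProduct.map_zero_right, LinearMap.zero_comp,
          LinearMap.zero_comp]
  refine ⟨key, ?_⟩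
  rw [eq_top_iff]
  rintro x -
  induction x using DirectSum.induction_on with
  | zero => exact Submodule.zero_mem _
  | of i c =>
    apply Submodule.mem_iSup_of_mem (i + 1)
    show DirectSum.of C i c ∈ LinearMap.ker (psiTau k C i)
    rw [LinearMap.mem_ker, ← DirectSum.lof_eq_of k, ← LinearMap.comp_apply,
      key i i le_rfl, LinearMap.zero_apply]
  | add x y hx hy => exact Submodule.add_mem _ hx hy
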